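/- In the non-binary voting model with M world states and N agents, suppose the number N_F of friendly agents satisfies N_F < μ·N and the number N_U of unfriendly agents satisfies N_U < (1−μ)·N. Then every regular strategy profile Σ is an ε-strong Bayes Nash Equilibrium with ε = M·B·((M−1)·B + 1)·(1 − A(Σ)), where A(Σ) is the fidelity of Σ. -/

import Mathlib

namespace Voting

/-- The two alternatives: `A` (accept) and `R` (reject). -/
inductive Alt : Type
  | A
  | R
deriving DecidableEq

instance : Fintype Alt := ⟨{Alt.A, Alt.R}, fun x => by cases x <;> simp⟩

/-- The shared parameters of a non-binary voting instance with `M` world states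
and `S` signals. -/
structure NBParams (M S : ℕ) where
  hM : 0 < M
  hS : 0 < S
  /-- majority threshold -/
  μ : ℝ
  hμ0 : 0 < μ
  hμ1 : μ < 1
  /-- prior of the world states -/
  P : Fin M → ℝ
  hP : ∀ ω, 0 < P ω
  hPsum : ∑ ω, P ω = 1
  /-- `Psig s ω` : probability of signal `s` in state `ω` -/
  Psig : Fin S → Fin M → ℝ
  hPsig : ∀ s ω, 0 ≤ Psig s ω
  hPsigsum : ∀ ω, ∑ s, Psig s ω = 1
  /-- stochastic dominance: higher states make higher signals strictly more likely -/
  hdom : ∀ ω₁ ω₂ : Fin M, ω₂ < ω₁ → ∀ s : Fin S, 0 < (s : ℕ) →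
    ∑ s' ∈ Finset.univ.filter (fun s' => s ≤ s'), Psig s' ω₂ <
      ∑ s' ∈ Finset.univ.filter (fun s' => s ≤ s'), Psig s' ω₁
  /-- upper bound of the utility functions -/
  B : ℕ
  hB : 0 < B
  /-- `αA ω` : the (approximate) fraction of agents preferring `A` in state `ω` -/
  αA : Fin M → ℝ
  hαA0 : ∀ ω, 0 ≤ αA ω
  hαA1 : ∀ ω, αA ω ≤ 1
  hαAμ : ∀ ω, αA ω ≠ μ
  hαAmono : Monotone αA
  /-- `𝓛 = {ω | αA ω < μ}` is nonempty -/
  hLne : ∃ ω, αA ω < μ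
  /-- `𝓗 = {ω | αA ω > μ}` is nonempty -/
  hHne : ∃ ω, μ < αA ω

/-- A non-binary voting instance with `N` agents. -/
structure NBInstance (M S : ℕ) extends NBParams M S where
  N : ℕ
  /-- the utility function of each agent -/
  u : Fin N → Fin M → Alt → ℕ
  hub : ∀ n ω a, u n ω a ≤ B
  huA : ∀ n, StrictMono fun ω => u n ω Alt.A
  huR : ∀ n, StrictAnti fun ω => u n ω Alt.R
  hne : ∀ n ω, u n ω Alt.A ≠ u n ω Alt.R
  /-- in each state `ω`, exactly `⌊(1 - αA ω)·N⌋` agents prefer `R` -/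
  hcount : ∀ ω, ({n : Fin N | u n ω Alt.A < u n ω Alt.R}).ncard = ⌊(1 - αA ω) * (N : ℝ)⌋₊

variable {M S : ℕ}

/-- A (mixed) strategy profile: for each agent, the probability of voting for `A`
upon each signal. -/
abbrev NBProfile (I : NBInstance M S) : Type := Fin I.N → Fin S → ℝ

/-- All coordinates of the profile are genuine probabilities. -/
def NBValidProfile (I : NBInstance M S) (sp : NBProfile I) : Prop :=
  ∀ n s, 0 ≤ sp n s ∧ sp n s ≤ 1

/-- Probability that agent `n` votes for `A`, conditioned on the world state `ω`. -/
noncomputable def nbpA (I : NBInstance M S) (sp : NBProfile I) (n : Fin I.N) (ω : Fin M) : ℝ :=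
  ∑ s, I.Psig s ω * sp n s

open Finset in
/-- `nblambdaA I sp ω` : the probability that at least `μ·N` agents vote for `A`,
conditioned on the world state `ω` (conditionally on the state, the votes are
independent, agent `n` voting for `A` with probability `nbpA I sp n ω`). -/
noncomputable def nblambdaA (I : NBInstance M S) (sp : NBProfile I) (ω : Fin M) : ℝ :=
  ∑ v : Fin I.N → Bool,
    if I.μ * (I.N : ℝ) ≤ ((univ.filter fun n => v n = true).card : ℝ) then
      ∏ n, (if v n = true then nbpA I sp n ω else 1 - nbpA I sp n ω)
    else 0

/-- The set `𝓛` of world states where `R` is the informed majority decision. -/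
noncomputable def Lset (p : NBParams M S) : Finset (Fin M) :=
  Finset.univ.filter fun ω => p.αA ω < p.μ

/-- The set `𝓗` of world states where `A` is the informed majority decision. -/
noncomputable def Hset (p : NBParams M S) : Finset (Fin M) :=
  Finset.univ.filter fun ω => p.μ < p.αA ω

lemma Lset_nonempty (p : NBParams M S) : (Lset p).Nonempty := by
  obtain ⟨ω, hω⟩ := p.hLne
  exact ⟨ω, Finset.mem_filter.mpr ⟨Finset.mem_univ ω, hω⟩⟩

lemma Hset_nonempty (p : NBParams M S) : (Hset p).Nonempty := by
  obtain ⟨ω, hω⟩ := p.hHne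
  exact ⟨ω, Finset.mem_filter.mpr ⟨Finset.mem_univ ω, hω⟩⟩

/-- The fidelity of a strategy profile: the probability that the informed majority
decision is reached. -/
noncomputable def nbfid (I : NBInstance M S) (sp : NBProfile I) : ℝ :=
  ∑ ω ∈ Lset I.toNBParams, I.P ω * (1 - nblambdaA I sp ω) +
    ∑ ω ∈ Hset I.toNBParams, I.P ω * nblambdaA I sp ω

/-- The ex-ante expected utility of agent `n` under profile `sp`. -/
noncomputable def nbut (I : NBInstance M S) (sp : NBProfile I) (n : Fin I.N) : ℝ :=
  ∑ ω, I.P ω * (nblambdaA I sp ω * (I.u n ω Alt.A : ℝ)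
      + (1 - nblambdaA I sp ω) * (I.u n ω Alt.R : ℝ))

/-- A (candidate) friendly agent prefers `A` in some state of `𝓛`. -/
def NBFriendly (I : NBInstance M S) (n : Fin I.N) : Prop :=
  ∃ ω, I.αA ω < I.μ ∧ I.u n ω Alt.R < I.u n ω Alt.A

/-- A (candidate) unfriendly agent prefers `R` in some state of `𝓗`. -/
def NBUnfriendly (I : NBInstance M S) (n : Fin I.N) : Prop :=
  ∃ ω, I.μ < I.αA ω ∧ I.u n ω Alt.A < I.u n ω Alt.R

/-- A contingent agent prefers `R` exactly in the states of `𝓛`. -/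
def NBContingent (I : NBInstance M S) (n : Fin I.N) : Prop :=
  ∀ ω, I.u n ω Alt.A < I.u n ω Alt.R ↔ I.αA ω < I.μ

/-- A profile is regular if every friendly agent always votes for `A` and every
unfriendly agent always votes for `R`. -/
def NBRegular (I : NBInstance M S) (sp : NBProfile I) : Prop :=
  (∀ n, NBFriendly I n → ∀ s, sp n s = 1) ∧ (∀ n, NBUnfriendly I n → ∀ s, sp n s = 0)

/-- `ε`-strong Bayes Nash Equilibrium: no coalition `D` can deviate so that no member
is worse off and some member gains more than `ε`. -/
def NBIsEpsBNE (I : NBInstance M S) (sp : NBProfile I) (ε : ℝ) : Prop :=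
  ¬ ∃ (D : Set (Fin I.N)) (sp' : NBProfile I),
      NBValidProfile I sp' ∧
      (∀ n, n ∉ D → sp' n = sp n) ∧
      (∀ n ∈ D, nbut I sp n ≤ nbut I sp' n) ∧
      (∃ n ∈ D, nbut I sp n + ε < nbut I sp' n)

/-- Number of friendly agents. -/
noncomputable def nbFriendlyCount (I : NBInstance M S) : ℕ := {n | NBFriendly I n}.ncard

/-- Number of unfriendly agents. -/
noncomputable def nbUnfriendlyCount (I : NBInstance M S) : ℕ := {n | NBUnfriendly I n}.ncard

/-! ### Auxiliary lemmas -/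

section Aux

open Finset

lemma aux_sum_prod_bool {N : ℕ} (w : Fin N → Bool → ℝ) :
    ∑ v : Fin N → Bool, ∏ n, w n (v n) = ∏ n, (w n true + w n false) := by
  have h : ∀ n : Fin N, (w n true + w n false) = ∑ b : Bool, w n b := by
    intro n; simp [Fintype.sum_bool]
  simp_rw [h]
  rw [Finset.prod_univ_sum]
  rw [Fintype.piFinset_univ]

/-- The probability-of-acceptance function as a function of the per-agent
probability vector. -/
noncomputable def lamG (I : NBInstance M S) (p : Fin I.N → ℝ) : ℝ :=
  ∑ v : Fin I.N → Bool,
    if I.μ * (I.N : ℝ) ≤ ((Finset.univ.filter fun n => v n = true).card : ℝ) then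
      ∏ n, (if v n = true then p n else 1 - p n)
    else 0

lemma nblambdaA_eq_lamG (I : NBInstance M S) (sp : NBProfile I) (ω : Fin M) :
    nblambdaA I sp ω = lamG I (fun n => nbpA I sp n ω) := rfl

lemma lamG_nonneg (I : NBInstance M S) (p : Fin I.N → ℝ)
    (h0 : ∀ n, 0 ≤ p n) (h1 : ∀ n, p n ≤ 1) : 0 ≤ lamG I p := by
  apply Finset.sum_nonneg
  intro v _
  split
  · apply Finset.prod_nonneg
    intro n _
    split
    · exact h0 n
    · linarith [h1 n]
  · exact le_rfl

lemma lamG_le_one (I : NBInstance M S) (p : Fin I.N → ℝ)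
    (h0 : ∀ n, 0 ≤ p n) (h1 : ∀ n, p n ≤ 1) : lamG I p ≤ 1 := by
  have hle : lamG I p ≤ ∑ v : Fin I.N → Bool, ∏ n, (if v n = true then p n else 1 - p n) := by
    apply Finset.sum_le_sum
    intro v _
    split
    · exact le_rfl
    · apply Finset.prod_nonneg
      intro n _
      split
      · exact h0 n
      · linarith [h1 n]
  calc lamG I p ≤ _ := hle
    _ = ∏ n, (p n + (1 - p n)) :=
        aux_sum_prod_bool (fun n b => if b = true then p n else 1 - p n)
    _ = 1 := by simp

lemma aux_pair_sum {N : ℕ} (n : Fin N) (g : (Fin N → Bool) → ℝ) :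
    ∑ v : Fin N → Bool, g v
      = ∑ v ∈ Finset.univ.filter (fun v : Fin N → Bool => v n = true),
          (g v + g (Function.update v n false)) := by
  classical
  rw [Finset.sum_add_distrib]
  rw [← Finset.sum_filter_add_sum_filter_not Finset.univ (fun v : Fin N → Bool => v n = true) g]
  congr 1
  refine Finset.sum_nbij' (fun v => Function.update v n true)
    (fun v => Function.update v n false) ?_ ?_ ?_ ?_ ?_
  · intro a ha
    simp [Function.update_self]
  · intro b hb
    simp [Function.update_self]
  · intro a ha
    have : a n = false := by
      have := (Finset.mem_filter.mp ha).2
      simpa using this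
    funext m
    by_cases hm : m = n
    · subst hm; simp [Function.update_self, this]
    · simp [Function.update_of_ne hm]
  · intro b hb
    have : b n = true := by simpa using (Finset.mem_filter.mp hb).2
    funext m
    by_cases hm : m = n
    · subst hm; simp [Function.update_self, this]
    · simp [Function.update_of_ne hm]
  · intro a ha
    congr 1
    funext m
    by_cases hm : m = n
    · subst hm
      have : a m = false := by simpa using (Finset.mem_filter.mp ha).2
      simp [Function.update_self, this]
    · simp [Function.update_of_ne hm]

lemma lamG_mono_single (I : NBInstance M S) (p q : Fin I.N → ℝ) (n : Fin I.N)
    (hp : ∀ m, 0 ≤ p m ∧ p m ≤ 1) (hq : ∀ m, 0 ≤ q m ∧ q m ≤ 1)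
    (heq : ∀ m, m ≠ n → p m = q m) (hn : p n ≤ q n) :
    lamG I p ≤ lamG I q := by
  classical
  rw [lamG, lamG, aux_pair_sum n, aux_pair_sum n]
  apply Finset.sum_le_sum
  intro v hv
  have hvn : v n = true := by simpa using (Finset.mem_filter.mp hv).2
  set R : ℝ := ∏ m ∈ Finset.univ.erase n, (if v m = true then p m else 1 - p m) with hR
  have hRq : ∏ m ∈ Finset.univ.erase n, (if v m = true then q m else 1 - q m) = R := by
    apply Finset.prod_congr rfl
    intro m hm
    rw [heq m (Finset.mem_erase.mp hm).1]
  have hR0 : 0 ≤ R := by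
    apply Finset.prod_nonneg
    intro m _
    split
    · exact (hp m).1
    · linarith [(hp m).2]
  have hprod_p : (∏ m, (if v m = true then p m else 1 - p m)) = p n * R := by
    rw [← Finset.mul_prod_erase Finset.univ _ (Finset.mem_univ n), hvn, if_pos rfl]
  have hprod_q : (∏ m, (if v m = true then q m else 1 - q m)) = q n * R := by
    rw [← Finset.mul_prod_erase Finset.univ _ (Finset.mem_univ n), hvn, if_pos rfl, hRq]
  have hupdrest : ∀ (x : Fin I.N → ℝ),
      (∏ m ∈ Finset.univ.erase n,
        (if (Function.update v n false) m = true then x m else 1 - x m)) =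
      ∏ m ∈ Finset.univ.erase n, (if v m = true then x m else 1 - x m) := by
    intro x
    apply Finset.prod_congr rfl
    intro m hm
    rw [Function.update_of_ne (Finset.mem_erase.mp hm).1]
  have hprod_p' : (∏ m, (if (Function.update v n false) m = true then p m else 1 - p m))
      = (1 - p n) * R := by
    rw [← Finset.mul_prod_erase Finset.univ _ (Finset.mem_univ n), hupdrest]
    simp [Function.update_self, hR]
  have hprod_q' : (∏ m, (if (Function.update v n false) m = true then q m else 1 - q m))
      = (1 - q n) * R := by
    rw [← Finset.mul_prod_erase Finset.univ _ (Finset.mem_univ n), hupdrest, hRq]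
    simp [Function.update_self]
  rw [hprod_p, hprod_q, hprod_p', hprod_q']
  set c1 : Prop := I.μ * (I.N : ℝ) ≤
    ((Finset.univ.filter fun m => v m = true).card : ℝ) with hc1
  set c0 : Prop := I.μ * (I.N : ℝ) ≤
    ((Finset.univ.filter fun m => (Function.update v n false) m = true).card : ℝ) with hc0
  have hcond : c0 → c1 := by
    intro h
    refine le_trans h ?_
    have hsub : (Finset.univ.filter fun m => (Function.update v n false) m = true) ⊆
        (Finset.univ.filter fun m => v m = true) := by
      intro m hm
      have hm' := (Finset.mem_filter.mp hm).2
      by_cases hmn : m = n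
      · subst hmn; simp [Function.update_self] at hm'
      · rw [Function.update_of_ne hmn] at hm'
        exact Finset.mem_filter.mpr ⟨Finset.mem_univ m, hm'⟩
    exact_mod_cast Finset.card_le_card hsub
  have e1 : (if c1 then p n * R else 0) = p n * (if c1 then R else 0) := by
    split_ifs <;> ring
  have e2 : (if c1 then q n * R else 0) = q n * (if c1 then R else 0) := by
    split_ifs <;> ring
  have e3 : (if c0 then (1 - p n) * R else 0) = (1 - p n) * (if c0 then R else 0) := by
    split_ifs <;> ring
  have e4 : (if c0 then (1 - q n) * R else 0) = (1 - q n) * (if c0 then R else 0) := by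
    split_ifs <;> ring
  rw [e1, e2, e3, e4]
  set A1 : ℝ := if c1 then R else 0 with hA1
  set A0 : ℝ := if c0 then R else 0 with hA0
  have hA01 : A0 ≤ A1 := by
    rw [hA1, hA0]
    split_ifs with h1 h2
    · exact le_rfl
    · exact absurd (hcond h1) h2
    · exact hR0
    · exact le_rfl
  nlinarith [mul_nonneg (sub_nonneg.mpr hn) (sub_nonneg.mpr hA01)]

lemma lamG_mono (I : NBInstance M S) (p q : Fin I.N → ℝ)
    (hp : ∀ m, 0 ≤ p m ∧ p m ≤ 1) (hq : ∀ m, 0 ≤ q m ∧ q m ≤ 1)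
    (hpq : ∀ m, p m ≤ q m) : lamG I p ≤ lamG I q := by
  classical
  have key : ∀ t : Finset (Fin I.N),
      lamG I p ≤ lamG I (fun m => if m ∈ t then q m else p m) := by
    intro t
    induction t using Finset.induction_on with
    | empty => simp
    | @insert n t hnt ih =>
      refine le_trans ih ?_
      apply lamG_mono_single I _ _ n
      · intro m
        by_cases hm : m ∈ t <;> simp [hm, hp m, hq m]
      · intro m
        by_cases hm : m ∈ insert n t <;> simp [hm, hp m, hq m]
      · intro m hm
        simp [Finset.mem_insert, hm, hnt]
      · simp [hnt, hpq n]
  have h := key Finset.univ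
  simpa using h

lemma LH_disjoint (p : NBParams M S) : Disjoint (Lset p) (Hset p) := by
  rw [Finset.disjoint_left]
  intro ω h1 h2
  simp only [Lset, Hset, Finset.mem_filter] at h1 h2
  linarith [h1.2, h2.2]

lemma LH_union (p : NBParams M S) : Lset p ∪ Hset p = Finset.univ := by
  ext ω
  simp only [Lset, Hset, Finset.mem_union, Finset.mem_filter, Finset.mem_univ, true_and,
    iff_true]
  exact (p.hαAμ ω).lt_or_gt

lemma sum_L_add_H (p : NBParams M S) (g : Fin M → ℝ) :
    ∑ ω ∈ Lset p, g ω + ∑ ω ∈ Hset p, g ω = ∑ ω, g ω := by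
  rw [← Finset.sum_union (LH_disjoint p), LH_union]

lemma lt_of_LH {p : NBParams M S} {ω₁ ω₂ : Fin M}
    (h1 : ω₁ ∈ Lset p) (h2 : ω₂ ∈ Hset p) : ω₁ < ω₂ := by
  simp only [Lset, Hset, Finset.mem_filter] at h1 h2
  by_contra h
  push_neg at h
  have := p.hαAmono h
  linarith [h1.2, h2.2]

/-- The utility difference of agent `n` in state `ω`, as a real number. -/
noncomputable def dR (I : NBInstance M S) (n : Fin I.N) (ω : Fin M) : ℝ :=
  (I.u n ω Alt.A : ℝ) - (I.u n ω Alt.R : ℝ)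

lemma dR_lt (I : NBInstance M S) (n : Fin I.N) {ω₁ ω₂ : Fin M} (h : ω₁ < ω₂) :
    dR I n ω₁ < dR I n ω₂ := by
  have h1 : I.u n ω₁ Alt.A < I.u n ω₂ Alt.A := I.huA n h
  have h2 : I.u n ω₂ Alt.R < I.u n ω₁ Alt.R := I.huR n h
  have h1' : (I.u n ω₁ Alt.A : ℝ) < (I.u n ω₂ Alt.A : ℝ) := by exact_mod_cast h1
  have h2' : (I.u n ω₂ Alt.R : ℝ) < (I.u n ω₁ Alt.R : ℝ) := by exact_mod_cast h2
  simp only [dR]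
  linarith

lemma dR_bounds (I : NBInstance M S) (n : Fin I.N) (ω : Fin M) :
    -(I.B : ℝ) ≤ dR I n ω ∧ dR I n ω ≤ (I.B : ℝ) := by
  have h1 : (I.u n ω Alt.A : ℝ) ≤ (I.B : ℝ) := by exact_mod_cast I.hub n ω Alt.A
  have h2 : (I.u n ω Alt.R : ℝ) ≤ (I.B : ℝ) := by exact_mod_cast I.hub n ω Alt.R
  have h3 : (0 : ℝ) ≤ (I.u n ω Alt.A : ℝ) := Nat.cast_nonneg _
  have h4 : (0 : ℝ) ≤ (I.u n ω Alt.R : ℝ) := Nat.cast_nonneg _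
  constructor <;> (simp only [dR]; linarith)

lemma dR_ge_one (I : NBInstance M S) {n : Fin I.N} {ω : Fin M}
    (h : I.u n ω Alt.R < I.u n ω Alt.A) : 1 ≤ dR I n ω := by
  have : I.u n ω Alt.R + 1 ≤ I.u n ω Alt.A := h
  have h' : (I.u n ω Alt.R : ℝ) + 1 ≤ (I.u n ω Alt.A : ℝ) := by exact_mod_cast this
  simp only [dR]; linarith

lemma dR_le_neg_one (I : NBInstance M S) {n : Fin I.N} {ω : Fin M}
    (h : I.u n ω Alt.A < I.u n ω Alt.R) : dR I n ω ≤ -1 := by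
  have : I.u n ω Alt.A + 1 ≤ I.u n ω Alt.R := h
  have h' : (I.u n ω Alt.A : ℝ) + 1 ≤ (I.u n ω Alt.R : ℝ) := by exact_mod_cast this
  simp only [dR]; linarith

lemma friendly_dR_H (I : NBInstance M S) {n : Fin I.N} (hn : NBFriendly I n) :
    ∀ ω ∈ Hset I.toNBParams, 1 ≤ dR I n ω := by
  obtain ⟨ω₁, hα, hu⟩ := hn
  intro ω hω
  have hω₁L : ω₁ ∈ Lset I.toNBParams := by
    simp only [Lset, Finset.mem_filter]; exact ⟨Finset.mem_univ _, hα⟩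
  have hlt := lt_of_LH hω₁L hω
  exact le_trans (dR_ge_one I hu) (le_of_lt (dR_lt I n hlt))

lemma unfriendly_dR_L (I : NBInstance M S) {n : Fin I.N} (hn : NBUnfriendly I n) :
    ∀ ω ∈ Lset I.toNBParams, dR I n ω ≤ -1 := by
  obtain ⟨ω₂, hα, hu⟩ := hn
  intro ω hω
  have hω₂H : ω₂ ∈ Hset I.toNBParams := by
    simp only [Hset, Finset.mem_filter]; exact ⟨Finset.mem_univ _, hα⟩
  have hlt := lt_of_LH hω hω₂H
  exact le_trans (le_of_lt (dR_lt I n hlt)) (dR_le_neg_one I hu)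

lemma neither_dR (I : NBInstance M S) {n : Fin I.N}
    (hF : ¬ NBFriendly I n) (hU : ¬ NBUnfriendly I n) :
    (∀ ω ∈ Lset I.toNBParams, dR I n ω ≤ -1) ∧
      (∀ ω ∈ Hset I.toNBParams, 1 ≤ dR I n ω) := by
  constructor
  · intro ω hω
    have hα : I.αA ω < I.μ := by
      simpa only [Lset, Finset.mem_filter, Finset.mem_univ, true_and] using hω
    apply dR_le_neg_one I
    rcases lt_or_gt_of_ne (I.hne n ω) with h | h
    · exact h
    · exact absurd ⟨ω, hα, h⟩ hF
  · intro ω hω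
    have hα : I.μ < I.αA ω := by
      simpa only [Hset, Finset.mem_filter, Finset.mem_univ, true_and] using hω
    apply dR_ge_one I
    rcases lt_or_gt_of_ne (I.hne n ω) with h | h
    · exact absurd ⟨ω, hα, h⟩ hU
    · exact h

lemma nbpA_mem (I : NBInstance M S) (sp : NBProfile I) (h : NBValidProfile I sp)
    (n : Fin I.N) (ω : Fin M) : 0 ≤ nbpA I sp n ω ∧ nbpA I sp n ω ≤ 1 := by
  constructor
  · apply Finset.sum_nonneg
    intro s' _
    exact mul_nonneg (I.hPsig s' ω) (h n s').1
  · calc nbpA I sp n ω ≤ ∑ s', I.Psig s' ω * 1 := by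
          apply Finset.sum_le_sum
          intro s' _
          exact mul_le_mul_of_nonneg_left (h n s').2 (I.hPsig s' ω)
    _ = 1 := by simp [I.hPsigsum ω]

lemma nbut_sub (I : NBInstance M S) (sp sp' : NBProfile I) (n : Fin I.N) :
    nbut I sp' n - nbut I sp n
      = ∑ ω, (I.P ω * (nblambdaA I sp' ω - nblambdaA I sp ω)) * dR I n ω := by
  rw [nbut, nbut, ← Finset.sum_sub_distrib]
  apply Finset.sum_congr rfl
  intro ω _
  simp only [dR]
  ring

end Aux

/-! ### Abstract case analysis lemmas -/

section Cases

variable {M : ℕ}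

/-- The contingent-deviator case. -/
lemma case_contingent (L H : Finset (Fin M)) (s sP sN dc d : Fin M → ℝ) (B δ : ℝ)
    (hB1 : 1 ≤ B) (hδ0 : 0 ≤ δ)
    (hsplit : ∀ ω, s ω = sP ω - sN ω) (hsP : ∀ ω, 0 ≤ sP ω) (hsN : ∀ ω, 0 ≤ sN ω)
    (hres : ∑ ω ∈ L, sN ω + ∑ ω ∈ H, sP ω ≤ δ)
    (hdB : ∀ ω, -B ≤ d ω ∧ d ω ≤ B)
    (hdcB : ∀ ω, -B ≤ dc ω ∧ dc ω ≤ B)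
    (hdcL : ∀ ω ∈ L, dc ω ≤ -1) (hdcH : ∀ ω ∈ H, 1 ≤ dc ω)
    (hGc : 0 ≤ ∑ ω ∈ L, s ω * dc ω + ∑ ω ∈ H, s ω * dc ω) :
    ∑ ω ∈ L, s ω * d ω + ∑ ω ∈ H, s ω * d ω ≤ B * (B + 1) * δ := by
  have hX0 : 0 ≤ ∑ ω ∈ L, sN ω := Finset.sum_nonneg fun ω _ => hsN ω
  have hY0 : 0 ≤ ∑ ω ∈ H, sP ω := Finset.sum_nonneg fun ω _ => hsP ω
  have C1 : ∑ ω ∈ L, s ω * dc ω ≤ ∑ ω ∈ L, (B * sN ω - sP ω) := by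
    apply Finset.sum_le_sum
    intro ω hω
    rw [hsplit ω]
    nlinarith [mul_le_mul_of_nonneg_left (hdcL ω hω) (hsP ω),
      mul_le_mul_of_nonneg_left (hdcB ω).1 (hsN ω)]
  have C2 : ∑ ω ∈ H, s ω * dc ω ≤ ∑ ω ∈ H, (B * sP ω - sN ω) := by
    apply Finset.sum_le_sum
    intro ω hω
    rw [hsplit ω]
    nlinarith [mul_le_mul_of_nonneg_left (hdcB ω).2 (hsP ω),
      mul_le_mul_of_nonneg_left (hdcH ω hω) (hsN ω)]
  have C1' : ∑ ω ∈ L, (B * sN ω - sP ω) = B * ∑ ω ∈ L, sN ω - ∑ ω ∈ L, sP ω := by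
    simp [Finset.sum_sub_distrib, Finset.mul_sum]
  have C2' : ∑ ω ∈ H, (B * sP ω - sN ω) = B * ∑ ω ∈ H, sP ω - ∑ ω ∈ H, sN ω := by
    simp [Finset.sum_sub_distrib, Finset.mul_sum]
  -- hence the "free" masses are bounded by B·δ
  have hfree : ∑ ω ∈ L, sP ω + ∑ ω ∈ H, sN ω ≤ B * δ := by
    have hBres : B * (∑ ω ∈ L, sN ω + ∑ ω ∈ H, sP ω) ≤ B * δ :=
      mul_le_mul_of_nonneg_left hres (by linarith)
    rw [C1'] at C1; rw [C2'] at C2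
    nlinarith
  have G1 : ∑ ω ∈ L, s ω * d ω ≤ ∑ ω ∈ L, (B * sP ω + B * sN ω) := by
    apply Finset.sum_le_sum
    intro ω hω
    rw [hsplit ω]
    nlinarith [mul_le_mul_of_nonneg_left (hdB ω).2 (hsP ω),
      mul_le_mul_of_nonneg_left (hdB ω).1 (hsN ω)]
  have G2 : ∑ ω ∈ H, s ω * d ω ≤ ∑ ω ∈ H, (B * sP ω + B * sN ω) := by
    apply Finset.sum_le_sum
    intro ω hω
    rw [hsplit ω]
    nlinarith [mul_le_mul_of_nonneg_left (hdB ω).2 (hsP ω),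
      mul_le_mul_of_nonneg_left (hdB ω).1 (hsN ω)]
  have G1' : ∑ ω ∈ L, (B * sP ω + B * sN ω)
      = B * ∑ ω ∈ L, sP ω + B * ∑ ω ∈ L, sN ω := by
    simp [Finset.sum_add_distrib, Finset.mul_sum]
  have G2' : ∑ ω ∈ H, (B * sP ω + B * sN ω)
      = B * ∑ ω ∈ H, sP ω + B * ∑ ω ∈ H, sN ω := by
    simp [Finset.sum_add_distrib, Finset.mul_sum]
  rw [G1'] at G1; rw [G2'] at G2
  nlinarith [mul_le_mul_of_nonneg_left hfree (by linarith : (0:ℝ) ≤ B),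
    mul_le_mul_of_nonneg_left hres (by linarith : (0:ℝ) ≤ B)]

/-- The pure-friendly-coalition case: acceptance probabilities only decrease. -/
lemma case_pure_f (L H : Finset (Fin M)) (s sN df : Fin M → ℝ) (B δ : ℝ)
    (hB1 : 1 ≤ B) (hδ0 : 0 ≤ δ)
    (hsle : ∀ ω, s ω = -sN ω) (hsN : ∀ ω, 0 ≤ sN ω)
    (hres : ∑ ω ∈ L, sN ω ≤ δ)
    (hdfB : ∀ ω, -B ≤ df ω ∧ df ω ≤ B)
    (hdfH : ∀ ω ∈ H, 1 ≤ df ω) :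
    ∑ ω ∈ L, s ω * df ω + ∑ ω ∈ H, s ω * df ω ≤ B * (B + 1) * δ := by
  have G1 : ∑ ω ∈ L, s ω * df ω ≤ ∑ ω ∈ L, B * sN ω := by
    apply Finset.sum_le_sum
    intro ω hω
    rw [hsle ω]
    nlinarith [mul_le_mul_of_nonneg_left (hdfB ω).1 (hsN ω)]
  have G2 : ∑ ω ∈ H, s ω * df ω ≤ 0 := by
    apply Finset.sum_nonpos
    intro ω hω
    rw [hsle ω]
    nlinarith [mul_le_mul_of_nonneg_left (hdfH ω hω) (hsN ω), hsN ω]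
  have G1' : ∑ ω ∈ L, B * sN ω = B * ∑ ω ∈ L, sN ω := by rw [Finset.mul_sum]
  rw [G1'] at G1
  nlinarith [mul_le_mul_of_nonneg_left hres (by linarith : (0:ℝ) ≤ B),
    mul_nonneg (mul_nonneg (by linarith : (0:ℝ) ≤ B) (by linarith : (0:ℝ) ≤ B)) hδ0]

/-- The pure-unfriendly-coalition case: acceptance probabilities only increase. -/
lemma case_pure_u (L H : Finset (Fin M)) (s sP du : Fin M → ℝ) (B δ : ℝ)
    (hB1 : 1 ≤ B) (hδ0 : 0 ≤ δ)
    (hsge : ∀ ω, s ω = sP ω) (hsP : ∀ ω, 0 ≤ sP ω)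
    (hres : ∑ ω ∈ H, sP ω ≤ δ)
    (hduB : ∀ ω, -B ≤ du ω ∧ du ω ≤ B)
    (hduL : ∀ ω ∈ L, du ω ≤ -1) :
    ∑ ω ∈ L, s ω * du ω + ∑ ω ∈ H, s ω * du ω ≤ B * (B + 1) * δ := by
  have G1 : ∑ ω ∈ L, s ω * du ω ≤ 0 := by
    apply Finset.sum_nonpos
    intro ω hω
    rw [hsge ω]
    nlinarith [mul_le_mul_of_nonneg_left (hduL ω hω) (hsP ω), hsP ω]
  have G2 : ∑ ω ∈ H, s ω * du ω ≤ ∑ ω ∈ H, B * sP ω := by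
    apply Finset.sum_le_sum
    intro ω hω
    rw [hsge ω]
    nlinarith [mul_le_mul_of_nonneg_left (hduB ω).2 (hsP ω)]
  have G2' : ∑ ω ∈ H, B * sP ω = B * ∑ ω ∈ H, sP ω := by rw [Finset.mul_sum]
  rw [G2'] at G2
  nlinarith [mul_le_mul_of_nonneg_left hres (by linarith : (0:ℝ) ≤ B),
    mul_nonneg (mul_nonneg (by linarith : (0:ℝ) ≤ B) (by linarith : (0:ℝ) ≤ B)) hδ0]

/-- The mixed case, bounding the gain of a friendly agent using the weak gain
of an unfriendly coalition member. -/
lemma case_mixed_f (L H : Finset (Fin M)) (s sP sN df du : Fin M → ℝ) (B δ : ℝ)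
    (hB1 : 1 ≤ B) (hδ0 : 0 ≤ δ)
    (hsplit : ∀ ω, s ω = sP ω - sN ω) (hsP : ∀ ω, 0 ≤ sP ω) (hsN : ∀ ω, 0 ≤ sN ω)
    (hres : ∑ ω ∈ L, sN ω + ∑ ω ∈ H, sP ω ≤ δ)
    (hLne : L.Nonempty)
    (hdfB : ∀ ω, -B ≤ df ω ∧ df ω ≤ B) (hduB : ∀ ω, -B ≤ du ω ∧ du ω ≤ B)
    (hmonf : ∀ ω₁ ∈ L, ∀ ω₂ ∈ H, df ω₁ ≤ df ω₂)
    (hmonu : ∀ ω₁ ∈ L, ∀ ω₂ ∈ H, du ω₁ ≤ du ω₂)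
    (hdfH : ∀ ω ∈ H, 1 ≤ df ω) (hduL : ∀ ω ∈ L, du ω ≤ -1)
    (hGu : 0 ≤ ∑ ω ∈ L, s ω * du ω + ∑ ω ∈ H, s ω * du ω) :
    ∑ ω ∈ L, s ω * df ω + ∑ ω ∈ H, s ω * df ω ≤ B * (B + 1) * δ := by
  have hB0 : (0:ℝ) ≤ B := by linarith
  set eU : Fin M → ℝ := fun ω => max (-(du ω)) 0 with heU
  have heU0 : ∀ ω, 0 ≤ eU ω := fun ω => le_max_right _ _
  have heUge : ∀ ω, -(du ω) ≤ eU ω := fun ω => le_max_left _ _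
  have heUB : ∀ ω, eU ω ≤ B := fun ω => max_le (by linarith [(hduB ω).1]) hB0
  have heUL : ∀ ω ∈ L, eU ω = -(du ω) := fun ω hω =>
    max_eq_left (by linarith [hduL ω hω])
  have heUL1 : ∀ ω ∈ L, 1 ≤ eU ω := fun ω hω => by
    rw [heUL ω hω]; linarith [hduL ω hω]
  set T : Finset ℝ := L.image (fun ω => max (df ω / eU ω) 0) with hT
  have hTne : T.Nonempty := hLne.image _
  set c : ℝ := T.max' hTne with hc
  have hc0 : 0 ≤ c := by
    obtain ⟨ω, hω⟩ := hLne
    exact le_trans (le_max_right _ 0) (Finset.le_max' T _ (Finset.mem_image_of_mem _ hω))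
  have hcB : c ≤ B := by
    apply Finset.max'_le
    intro x hx
    obtain ⟨ω, hω, rfl⟩ := Finset.mem_image.mp hx
    refine max_le ?_ hB0
    rw [div_le_iff₀ (by linarith [heUL1 ω hω] : (0:ℝ) < eU ω)]
    nlinarith [(hdfB ω).2, heUL1 ω hω]
  have hP1 : ∀ ω ∈ L, df ω ≤ c * eU ω := by
    intro ω hω
    have h1 : df ω / eU ω ≤ c :=
      le_trans (le_max_left _ 0) (Finset.le_max' T _ (Finset.mem_image_of_mem _ hω))
    have h2 : (0:ℝ) < eU ω := by linarith [heUL1 ω hω]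
    calc df ω = df ω / eU ω * eU ω := by field_simp
      _ ≤ c * eU ω := mul_le_mul_of_nonneg_right h1 h2.le
  have hP2 : ∀ ω ∈ H, c * eU ω ≤ df ω := by
    intro ω hω
    by_cases hdu : du ω < 0
    · have heq : eU ω = -(du ω) := max_eq_left (by linarith)
      have hpos : (0:ℝ) < eU ω := by rw [heq]; linarith
      have hcle : c ≤ df ω / eU ω := by
        apply Finset.max'_le
        intro x hx
        obtain ⟨ωL, hωL, rfl⟩ := Finset.mem_image.mp hx
        have hposL : (0:ℝ) < eU ωL := by linarith [heUL1 ωL hωL]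
        refine max_le ?_ (div_nonneg (by linarith [hdfH ω hω]) hpos.le)
        rw [div_le_div_iff₀ hposL hpos]
        by_cases hdfL : df ωL ≤ 0
        · nlinarith [mul_nonneg (by linarith [hdfH ω hω] : (0:ℝ) ≤ df ω) (heU0 ωL),
            mul_nonneg (neg_nonneg.mpr hdfL) (heU0 ω)]
        · push_neg at hdfL
          have h1 : df ωL ≤ df ω := hmonf ωL hωL ω hω
          have h2 : eU ω ≤ eU ωL := by
            rw [heq, heUL ωL hωL]
            linarith [hmonu ωL hωL ω hω]
          exact mul_le_mul h1 h2 (heU0 ω) (by linarith)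
      calc c * eU ω ≤ df ω / eU ω * eU ω := mul_le_mul_of_nonneg_right hcle hpos.le
        _ = df ω := div_mul_cancel₀ _ (ne_of_gt hpos)
    · push_neg at hdu
      have heq : eU ω = 0 := max_eq_right (by linarith)
      rw [heq, mul_zero]
      linarith [hdfH ω hω]
  have S1 : ∑ ω ∈ L, s ω * df ω
      ≤ c * (∑ ω ∈ L, sP ω * eU ω) + B * ∑ ω ∈ L, sN ω := by
    rw [Finset.mul_sum, Finset.mul_sum, ← Finset.sum_add_distrib]
    apply Finset.sum_le_sum
    intro ω hω
    rw [hsplit ω]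
    nlinarith [mul_le_mul_of_nonneg_left (hP1 ω hω) (hsP ω),
      mul_le_mul_of_nonneg_left (hdfB ω).1 (hsN ω)]
  have S2 : ∑ ω ∈ H, s ω * df ω
      ≤ B * (∑ ω ∈ H, sP ω) - ∑ ω ∈ H, sN ω * df ω := by
    rw [Finset.mul_sum, ← Finset.sum_sub_distrib]
    apply Finset.sum_le_sum
    intro ω hω
    rw [hsplit ω]
    nlinarith [mul_le_mul_of_nonneg_left (hdfB ω).2 (hsP ω)]
  have S3 : ∑ ω ∈ L, sP ω * eU ω
      ≤ B * (∑ ω ∈ L, sN ω) + B * (∑ ω ∈ H, sP ω) + ∑ ω ∈ H, sN ω * eU ω := by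
    have hL : ∑ ω ∈ L, s ω * du ω
        = ∑ ω ∈ L, sN ω * eU ω - ∑ ω ∈ L, sP ω * eU ω := by
      rw [← Finset.sum_sub_distrib]
      apply Finset.sum_congr rfl
      intro ω hω
      rw [hsplit ω, heUL ω hω]
      ring
    have hH : ∑ ω ∈ H, s ω * du ω
        ≤ B * (∑ ω ∈ H, sP ω) + ∑ ω ∈ H, sN ω * eU ω := by
      rw [Finset.mul_sum, ← Finset.sum_add_distrib]
      apply Finset.sum_le_sum
      intro ω hω
      rw [hsplit ω]
      nlinarith [mul_le_mul_of_nonneg_left (hduB ω).2 (hsP ω),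
        mul_le_mul_of_nonneg_left (heUge ω) (hsN ω)]
    have h3 : ∑ ω ∈ L, sN ω * eU ω ≤ B * ∑ ω ∈ L, sN ω := by
      rw [Finset.mul_sum]
      apply Finset.sum_le_sum
      intro ω hω
      nlinarith [mul_le_mul_of_nonneg_left (heUB ω) (hsN ω)]
    rw [hL] at hGu
    linarith
  have S4 : c * (∑ ω ∈ H, sN ω * eU ω) ≤ ∑ ω ∈ H, sN ω * df ω := by
    rw [Finset.mul_sum]
    apply Finset.sum_le_sum
    intro ω hω
    nlinarith [mul_le_mul_of_nonneg_left (hP2 ω hω) (hsN ω)]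
  have t1 : c * (∑ ω ∈ L, sP ω * eU ω)
      ≤ c * (B * (∑ ω ∈ L, sN ω) + B * (∑ ω ∈ H, sP ω) + ∑ ω ∈ H, sN ω * eU ω) :=
    mul_le_mul_of_nonneg_left S3 hc0
  nlinarith [S1, S2, t1, S4,
    mul_le_mul_of_nonneg_left hres (mul_nonneg hc0 hB0),
    mul_le_mul_of_nonneg_left hres hB0,
    mul_le_mul_of_nonneg_right (mul_le_mul_of_nonneg_right hcB hB0) hδ0]

/-- The mixed case, bounding the gain of an unfriendly agent using the weak gain
of a friendly coalition member. -/
lemma case_mixed_u (L H : Finset (Fin M)) (s sP sN df du : Fin M → ℝ) (B δ : ℝ)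
    (hB1 : 1 ≤ B) (hδ0 : 0 ≤ δ)
    (hsplit : ∀ ω, s ω = sP ω - sN ω) (hsP : ∀ ω, 0 ≤ sP ω) (hsN : ∀ ω, 0 ≤ sN ω)
    (hres : ∑ ω ∈ L, sN ω + ∑ ω ∈ H, sP ω ≤ δ)
    (hHne : H.Nonempty)
    (hdfB : ∀ ω, -B ≤ df ω ∧ df ω ≤ B) (hduB : ∀ ω, -B ≤ du ω ∧ du ω ≤ B)
    (hmonf : ∀ ω₁ ∈ L, ∀ ω₂ ∈ H, df ω₁ ≤ df ω₂)
    (hmonu : ∀ ω₁ ∈ L, ∀ ω₂ ∈ H, du ω₁ ≤ du ω₂)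
    (hdfH : ∀ ω ∈ H, 1 ≤ df ω) (hduL : ∀ ω ∈ L, du ω ≤ -1)
    (hGf : 0 ≤ ∑ ω ∈ L, s ω * df ω + ∑ ω ∈ H, s ω * df ω) :
    ∑ ω ∈ L, s ω * du ω + ∑ ω ∈ H, s ω * du ω ≤ B * (B + 1) * δ := by
  have hB0 : (0:ℝ) ≤ B := by linarith
  set eU : Fin M → ℝ := fun ω => max (-(du ω)) 0 with heU
  have heU0 : ∀ ω, 0 ≤ eU ω := fun ω => le_max_right _ _
  have heUge : ∀ ω, -(du ω) ≤ eU ω := fun ω => le_max_left _ _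
  have heUB : ∀ ω, eU ω ≤ B := fun ω => max_le (by linarith [(hduB ω).1]) hB0
  have heUL : ∀ ω ∈ L, eU ω = -(du ω) := fun ω hω =>
    max_eq_left (by linarith [hduL ω hω])
  have heUL1 : ∀ ω ∈ L, 1 ≤ eU ω := fun ω hω => by
    rw [heUL ω hω]; linarith [hduL ω hω]
  set dfP : Fin M → ℝ := fun ω => max (df ω) 0 with hdfP
  have hdfP0 : ∀ ω, 0 ≤ dfP ω := fun ω => le_max_right _ _
  have hdfPge : ∀ ω, df ω ≤ dfP ω := fun ω => le_max_left _ _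
  have hdfHpos : ∀ ω ∈ H, (0:ℝ) < df ω := fun ω hω => by linarith [hdfH ω hω]
  set T : Finset ℝ := H.image (fun ω => max (eU ω / df ω) 0) with hT
  have hTne : T.Nonempty := hHne.image _
  set c : ℝ := T.max' hTne with hc
  have hc0 : 0 ≤ c := by
    obtain ⟨ω, hω⟩ := hHne
    exact le_trans (le_max_right _ 0) (Finset.le_max' T _ (Finset.mem_image_of_mem _ hω))
  have hcB : c ≤ B := by
    apply Finset.max'_le
    intro x hx
    obtain ⟨ω, hω, rfl⟩ := Finset.mem_image.mp hx
    refine max_le ?_ hB0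
    rw [div_le_iff₀ (hdfHpos ω hω)]
    nlinarith [heUB ω, hdfH ω hω]
  have hQ1 : ∀ ω ∈ H, eU ω ≤ c * df ω := by
    intro ω hω
    have h1 : eU ω / df ω ≤ c :=
      le_trans (le_max_left _ 0) (Finset.le_max' T _ (Finset.mem_image_of_mem _ hω))
    calc eU ω = eU ω / df ω * df ω := (div_mul_cancel₀ _ (ne_of_gt (hdfHpos ω hω))).symm
      _ ≤ c * df ω := mul_le_mul_of_nonneg_right h1 (hdfHpos ω hω).le
  have hQ2 : ∀ ω ∈ L, c * dfP ω ≤ eU ω := by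
    intro ω hω
    by_cases hdf : df ω ≤ 0
    · have heq : dfP ω = 0 := max_eq_right hdf
      rw [heq, mul_zero]
      exact heU0 ω
    · push_neg at hdf
      have heq : dfP ω = df ω := max_eq_left hdf.le
      rw [heq]
      have hcle : c ≤ eU ω / df ω := by
        apply Finset.max'_le
        intro x hx
        obtain ⟨ωH, hωH, rfl⟩ := Finset.mem_image.mp hx
        refine max_le ?_ (div_nonneg (heU0 ω) hdf.le)
        rw [div_le_div_iff₀ (hdfHpos ωH hωH) hdf]
        by_cases hdu : du ωH < 0
        · have h1 : eU ωH ≤ eU ω := by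
            have e1 : eU ωH = -(du ωH) := max_eq_left (by linarith)
            rw [e1, heUL ω hω]
            linarith [hmonu ω hω ωH hωH]
          have h2 : df ω ≤ df ωH := hmonf ω hω ωH hωH
          exact mul_le_mul h1 h2 hdf.le (heU0 ω)
        · push_neg at hdu
          have heq2 : eU ωH = 0 := max_eq_right (by linarith)
          rw [heq2, zero_mul]
          exact mul_nonneg (heU0 ω) (hdfHpos ωH hωH).le
      calc c * df ω ≤ eU ω / df ω * df ω := mul_le_mul_of_nonneg_right hcle hdf.le
        _ = eU ω := div_mul_cancel₀ _ (ne_of_gt hdf)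
  have S1 : ∑ ω ∈ L, s ω * du ω
      ≤ B * (∑ ω ∈ L, sN ω) - ∑ ω ∈ L, sP ω * eU ω := by
    rw [Finset.mul_sum, ← Finset.sum_sub_distrib]
    apply Finset.sum_le_sum
    intro ω hω
    rw [hsplit ω, show du ω = -(eU ω) by rw [heUL ω hω]; ring]
    nlinarith [mul_le_mul_of_nonneg_left (heUB ω) (hsN ω)]
  have S2 : ∑ ω ∈ H, s ω * du ω
      ≤ B * (∑ ω ∈ H, sP ω) + c * (∑ ω ∈ H, sN ω * df ω) := by
    rw [Finset.mul_sum, Finset.mul_sum, ← Finset.sum_add_distrib]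
    apply Finset.sum_le_sum
    intro ω hω
    rw [hsplit ω]
    nlinarith [mul_le_mul_of_nonneg_left (hduB ω).2 (hsP ω),
      mul_le_mul_of_nonneg_left (heUge ω) (hsN ω),
      mul_le_mul_of_nonneg_left (hQ1 ω hω) (hsN ω)]
  have S3 : ∑ ω ∈ H, sN ω * df ω
      ≤ B * (∑ ω ∈ H, sP ω) + (∑ ω ∈ L, sP ω * dfP ω + B * ∑ ω ∈ L, sN ω) := by
    have hH : ∑ ω ∈ H, s ω * df ω
        = ∑ ω ∈ H, sP ω * df ω - ∑ ω ∈ H, sN ω * df ω := by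
      rw [← Finset.sum_sub_distrib]
      apply Finset.sum_congr rfl
      intro ω _
      rw [hsplit ω]
      ring
    have hHP : ∑ ω ∈ H, sP ω * df ω ≤ B * ∑ ω ∈ H, sP ω := by
      rw [Finset.mul_sum]
      apply Finset.sum_le_sum
      intro ω hω
      nlinarith [mul_le_mul_of_nonneg_left (hdfB ω).2 (hsP ω)]
    have hLb : ∑ ω ∈ L, s ω * df ω
        ≤ ∑ ω ∈ L, sP ω * dfP ω + B * ∑ ω ∈ L, sN ω := by
      rw [Finset.mul_sum, ← Finset.sum_add_distrib]
      apply Finset.sum_le_sum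
      intro ω hω
      rw [hsplit ω]
      nlinarith [mul_le_mul_of_nonneg_left (hdfPge ω) (hsP ω),
        mul_le_mul_of_nonneg_left (hdfB ω).1 (hsN ω)]
    rw [hH] at hGf
    linarith
  have S4 : c * (∑ ω ∈ L, sP ω * dfP ω) ≤ ∑ ω ∈ L, sP ω * eU ω := by
    rw [Finset.mul_sum]
    apply Finset.sum_le_sum
    intro ω hω
    nlinarith [mul_le_mul_of_nonneg_left (hQ2 ω hω) (hsP ω)]
  have t1 : c * (∑ ω ∈ H, sN ω * df ω)
      ≤ c * (B * (∑ ω ∈ H, sP ω) + (∑ ω ∈ L, sP ω * dfP ω + B * ∑ ω ∈ L, sN ω)) :=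
    mul_le_mul_of_nonneg_left S3 hc0
  nlinarith [S1, S2, t1, S4,
    mul_le_mul_of_nonneg_left hres (mul_nonneg hc0 hB0),
    mul_le_mul_of_nonneg_left hres hB0,
    mul_le_mul_of_nonneg_right (mul_le_mul_of_nonneg_right hcB hB0) hδ0]

end Cases

/-- Lemma 2 of the paper, non-binary setting. If the friendly agents
are fewer than `μ·N` and the unfriendly agents are fewer than `(1-μ)·N`, then every
regular strategy profile `sp` is an `ε`-strong Bayes Nash Equilibrium with
`ε = M·B·((M-1)·B + 1)·(1 - A(sp))`. -/
theorem nb_regular_is_eps_BNE {M S : ℕ} (I : NBInstance M S)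
    (hF : (nbFriendlyCount I : ℝ) < I.μ * (I.N : ℝ))
    (hU : (nbUnfriendlyCount I : ℝ) < (1 - I.μ) * (I.N : ℝ))
    (sp : NBProfile I) (hval : NBValidProfile I sp) (hreg : NBRegular I sp) :
    NBIsEpsBNE I sp
      ((M : ℝ) * (I.B : ℝ) * (((M : ℝ) - 1) * (I.B : ℝ) + 1) * (1 - nbfid I sp)) := by
  rintro ⟨D, sp', hval', hagree, hDle, n₀, hn₀D, hn₀gain⟩
  have hB1 : (1:ℝ) ≤ (I.B : ℝ) := by exact_mod_cast I.hB
  have hB0 : (0:ℝ) ≤ (I.B : ℝ) := by linarith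
  set L : Finset (Fin M) := Lset I.toNBParams with hLdef
  set H : Finset (Fin M) := Hset I.toNBParams with hHdef
  set s : Fin M → ℝ :=
    fun ω => I.P ω * (nblambdaA I sp' ω - nblambdaA I sp ω) with hs
  set sP : Fin M → ℝ := fun ω => max (s ω) 0 with hsPdef
  set sN : Fin M → ℝ := fun ω => max (-(s ω)) 0 with hsNdef
  have hsP0 : ∀ ω, 0 ≤ sP ω := fun ω => le_max_right _ _
  have hsN0 : ∀ ω, 0 ≤ sN ω := fun ω => le_max_right _ _
  have hsplit : ∀ ω, s ω = sP ω - sN ω := by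
    intro ω
    rcases le_total 0 (s ω) with h | h
    · rw [hsPdef, hsNdef]
      simp only [max_eq_left h, max_eq_right (by linarith : -(s ω) ≤ 0)]
      ring
    · rw [hsPdef, hsNdef]
      simp only [max_eq_right h, max_eq_left (by linarith : (0:ℝ) ≤ -(s ω))]
      ring
  -- bounds on the lambdas
  have hlam01 : ∀ ω, 0 ≤ nblambdaA I sp ω ∧ nblambdaA I sp ω ≤ 1 := by
    intro ω
    rw [nblambdaA_eq_lamG]
    exact ⟨lamG_nonneg I _ (fun n => (nbpA_mem I sp hval n ω).1)
        (fun n => (nbpA_mem I sp hval n ω).2),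
      lamG_le_one I _ (fun n => (nbpA_mem I sp hval n ω).1)
        (fun n => (nbpA_mem I sp hval n ω).2)⟩
  have hlam'01 : ∀ ω, 0 ≤ nblambdaA I sp' ω ∧ nblambdaA I sp' ω ≤ 1 := by
    intro ω
    rw [nblambdaA_eq_lamG]
    exact ⟨lamG_nonneg I _ (fun n => (nbpA_mem I sp' hval' n ω).1)
        (fun n => (nbpA_mem I sp' hval' n ω).2),
      lamG_le_one I _ (fun n => (nbpA_mem I sp' hval' n ω).1)
        (fun n => (nbpA_mem I sp' hval' n ω).2)⟩
  -- the resource bound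
  have hfid : nbfid I sp = ∑ ω ∈ L, I.P ω * (1 - nblambdaA I sp ω)
      + ∑ ω ∈ H, I.P ω * nblambdaA I sp ω := rfl
  have hδeq : 1 - nbfid I sp = ∑ ω ∈ L, I.P ω * nblambdaA I sp ω
      + ∑ ω ∈ H, I.P ω * (1 - nblambdaA I sp ω) := by
    have eL : ∑ ω ∈ L, I.P ω * (1 - nblambdaA I sp ω)
        + ∑ ω ∈ L, I.P ω * nblambdaA I sp ω = ∑ ω ∈ L, I.P ω := by
      rw [← Finset.sum_add_distrib]
      apply Finset.sum_congr rfl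
      intros; ring
    have eH : ∑ ω ∈ H, I.P ω * nblambdaA I sp ω
        + ∑ ω ∈ H, I.P ω * (1 - nblambdaA I sp ω) = ∑ ω ∈ H, I.P ω := by
      rw [← Finset.sum_add_distrib]
      apply Finset.sum_congr rfl
      intros; ring
    have hPsum : ∑ ω ∈ L, I.P ω + ∑ ω ∈ H, I.P ω = 1 := by
      rw [hLdef, hHdef, sum_L_add_H]
      exact I.hPsum
    rw [hfid]
    linarith
  have hres : ∑ ω ∈ L, sN ω + ∑ ω ∈ H, sP ω ≤ 1 - nbfid I sp := by
    rw [hδeq]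
    have h1 : ∑ ω ∈ L, sN ω ≤ ∑ ω ∈ L, I.P ω * nblambdaA I sp ω := by
      apply Finset.sum_le_sum
      intro ω _
      have hsω : s ω = I.P ω * nblambdaA I sp' ω - I.P ω * nblambdaA I sp ω := by
        simp only [hs]; ring
      show max (-(s ω)) 0 ≤ I.P ω * nblambdaA I sp ω
      apply max_le
      · nlinarith [mul_nonneg (I.hP ω).le (hlam'01 ω).1, hsω]
      · exact mul_nonneg (I.hP ω).le (hlam01 ω).1
    have h2 : ∑ ω ∈ H, sP ω ≤ ∑ ω ∈ H, I.P ω * (1 - nblambdaA I sp ω) := by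
      apply Finset.sum_le_sum
      intro ω _
      have hsω : s ω = I.P ω * nblambdaA I sp' ω - I.P ω * nblambdaA I sp ω := by
        simp only [hs]; ring
      show max (s ω) 0 ≤ I.P ω * (1 - nblambdaA I sp ω)
      apply max_le
      · nlinarith [mul_nonneg (I.hP ω).le (by linarith [(hlam'01 ω).2] :
            (0:ℝ) ≤ 1 - nblambdaA I sp' ω), hsω]
      · exact mul_nonneg (I.hP ω).le (by linarith [(hlam01 ω).2])
    linarith
  have hδ0 : 0 ≤ 1 - nbfid I sp := by
    have h1 : 0 ≤ ∑ ω ∈ L, sN ω := Finset.sum_nonneg fun ω _ => hsN0 ω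
    have h2 : 0 ≤ ∑ ω ∈ H, sP ω := Finset.sum_nonneg fun ω _ => hsP0 ω
    linarith
  -- gain formula
  have hgainsplit : ∀ n, nbut I sp' n - nbut I sp n
      = ∑ ω ∈ L, s ω * dR I n ω + ∑ ω ∈ H, s ω * dR I n ω := by
    intro n
    rw [nbut_sub I sp sp' n, hLdef, hHdef]
    exact (sum_L_add_H I.toNBParams (fun ω => s ω * dR I n ω)).symm
  -- monotonicity of the utility differences across L and H
  have hmon : ∀ (n : Fin I.N), ∀ ω₁ ∈ L, ∀ ω₂ ∈ H, dR I n ω₁ ≤ dR I n ω₂ :=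
    fun n ω₁ h1 ω₂ h2 => (dR_lt I n (lt_of_LH h1 h2)).le
  -- M ≥ 2
  obtain ⟨ωL0, hωL0⟩ := Lset_nonempty I.toNBParams
  obtain ⟨ωH0, hωH0⟩ := Hset_nonempty I.toNBParams
  have hM2 : 2 ≤ M := by
    have h1 : (ωL0 : ℕ) < (ωH0 : ℕ) := lt_of_LH hωL0 hωH0
    have h2 := ωH0.isLt
    omega
  have hM2R : (2:ℝ) ≤ (M:ℝ) := by exact_mod_cast hM2
  -- it suffices to bound the gain of n₀ by B(B+1)(1-fid)
  suffices hkey : nbut I sp' n₀ - nbut I sp n₀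
      ≤ (I.B:ℝ) * ((I.B:ℝ) + 1) * (1 - nbfid I sp) by
    have hεle : (I.B:ℝ) * ((I.B:ℝ)+1) * (1 - nbfid I sp)
        ≤ (M:ℝ) * (I.B:ℝ) * (((M:ℝ)-1)*(I.B:ℝ) + 1) * (1 - nbfid I sp) := by
      apply mul_le_mul_of_nonneg_right ?_ hδ0
      nlinarith [hB1, hM2R, mul_nonneg (by linarith : (0:ℝ) ≤ (M:ℝ) - 2) (by linarith : (0:ℝ) ≤ (I.B:ℝ))]
    linarith
  rw [hgainsplit n₀]
  by_cases hcase : ∃ cg ∈ D, ¬ NBFriendly I cg ∧ ¬ NBUnfriendly I cg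
  · -- a contingent deviator exists
    obtain ⟨cg, hcgD, hcgF, hcgU⟩ := hcase
    obtain ⟨hdcL, hdcH⟩ := neither_dR I hcgF hcgU
    have hGc : 0 ≤ ∑ ω ∈ L, s ω * dR I cg ω + ∑ ω ∈ H, s ω * dR I cg ω := by
      rw [← hgainsplit cg]
      linarith [hDle cg hcgD]
    exact case_contingent L H s sP sN (dR I cg) (dR I n₀) _ _ hB1 hδ0 hsplit hsP0 hsN0
      hres (dR_bounds I n₀) (dR_bounds I cg) hdcL hdcH hGc
  · have hFU : ∀ n ∈ D, NBFriendly I n ∨ NBUnfriendly I n := by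
      intro n hn
      by_contra h
      push_neg at h
      exact hcase ⟨n, hn, h.1, h.2⟩
    rcases hFU n₀ hn₀D with hF₀ | hU₀
    · by_cases hUD : ∃ u ∈ D, NBUnfriendly I u
      · -- mixed case, friendly gainer
        obtain ⟨uu, huD, huU⟩ := hUD
        have hGu : 0 ≤ ∑ ω ∈ L, s ω * dR I uu ω + ∑ ω ∈ H, s ω * dR I uu ω := by
          rw [← hgainsplit uu]
          linarith [hDle uu huD]
        exact case_mixed_f L H s sP sN (dR I n₀) (dR I uu) _ _ hB1 hδ0 hsplit hsP0 hsN0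
          hres (Lset_nonempty I.toNBParams) (dR_bounds I n₀) (dR_bounds I uu)
          (hmon n₀) (hmon uu) (friendly_dR_H I hF₀) (unfriendly_dR_L I huU) hGu
      · -- pure friendly coalition
        push_neg at hUD
        have hDF : ∀ n ∈ D, NBFriendly I n := fun n hn => (hFU n hn).resolve_right (hUD n hn)
        have hple : ∀ (n : Fin I.N) (ω : Fin M), nbpA I sp' n ω ≤ nbpA I sp n ω := by
          intro n ω
          apply Finset.sum_le_sum
          intro s' _
          apply mul_le_mul_of_nonneg_left ?_ (I.hPsig s' ω)
          by_cases hn : n ∈ D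
          · rw [hreg.1 n (hDF n hn) s']
            exact (hval' n s').2
          · rw [hagree n hn]
        have hlamle : ∀ ω, nblambdaA I sp' ω ≤ nblambdaA I sp ω := by
          intro ω
          rw [nblambdaA_eq_lamG, nblambdaA_eq_lamG]
          apply lamG_mono
          · exact fun m => ⟨(nbpA_mem I sp' hval' m ω).1, (nbpA_mem I sp' hval' m ω).2⟩
          · exact fun m => ⟨(nbpA_mem I sp hval m ω).1, (nbpA_mem I sp hval m ω).2⟩
          · exact fun m => hple m ω
        have hsle : ∀ ω, s ω = -(sN ω) := by
          intro ω
          have h : s ω ≤ 0 := by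
            have hsω : s ω = I.P ω * (nblambdaA I sp' ω - nblambdaA I sp ω) := by
              simp only [hs]
            nlinarith [mul_nonneg (I.hP ω).le (sub_nonneg.mpr (hlamle ω)), hsω]
          have h2 : sN ω = -(s ω) := max_eq_left (by linarith)
          rw [h2]
          ring
        have hresL : ∑ ω ∈ L, sN ω ≤ 1 - nbfid I sp := by
          have h2 : 0 ≤ ∑ ω ∈ H, sP ω := Finset.sum_nonneg fun ω _ => hsP0 ω
          linarith
        exact case_pure_f L H s sN (dR I n₀) _ _ hB1 hδ0 hsle hsN0 hresL
          (dR_bounds I n₀) (friendly_dR_H I hF₀)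
    · by_cases hFD : ∃ f ∈ D, NBFriendly I f
      · -- mixed case, unfriendly gainer
        obtain ⟨ff, hfD, hfF⟩ := hFD
        have hGf : 0 ≤ ∑ ω ∈ L, s ω * dR I ff ω + ∑ ω ∈ H, s ω * dR I ff ω := by
          rw [← hgainsplit ff]
          linarith [hDle ff hfD]
        exact case_mixed_u L H s sP sN (dR I ff) (dR I n₀) _ _ hB1 hδ0 hsplit hsP0 hsN0
          hres (Hset_nonempty I.toNBParams) (dR_bounds I ff) (dR_bounds I n₀)
          (hmon ff) (hmon n₀) (friendly_dR_H I hfF) (unfriendly_dR_L I hU₀) hGf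
      · -- pure unfriendly coalition
        push_neg at hFD
        have hDU : ∀ n ∈ D, NBUnfriendly I n := fun n hn => (hFU n hn).resolve_left (hFD n hn)
        have hpge : ∀ (n : Fin I.N) (ω : Fin M), nbpA I sp n ω ≤ nbpA I sp' n ω := by
          intro n ω
          apply Finset.sum_le_sum
          intro s' _
          apply mul_le_mul_of_nonneg_left ?_ (I.hPsig s' ω)
          by_cases hn : n ∈ D
          · rw [hreg.2 n (hDU n hn) s']
            exact (hval' n s').1
          · rw [hagree n hn]
        have hlamge : ∀ ω, nblambdaA I sp ω ≤ nblambdaA I sp' ω := by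
          intro ω
          rw [nblambdaA_eq_lamG, nblambdaA_eq_lamG]
          apply lamG_mono
          · exact fun m => ⟨(nbpA_mem I sp hval m ω).1, (nbpA_mem I sp hval m ω).2⟩
          · exact fun m => ⟨(nbpA_mem I sp' hval' m ω).1, (nbpA_mem I sp' hval' m ω).2⟩
          · exact fun m => hpge m ω
        have hsge : ∀ ω, s ω = sP ω := by
          intro ω
          have h : 0 ≤ s ω := by
            have hsω : s ω = I.P ω * (nblambdaA I sp' ω - nblambdaA I sp ω) := by
              simp only [hs]
            rw [hsω]
            exact mul_nonneg (I.hP ω).le (sub_nonneg.mpr (hlamge ω))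
          exact ((max_eq_left h : sP ω = s ω)).symm
        have hresH : ∑ ω ∈ H, sP ω ≤ 1 - nbfid I sp := by
          have h1 : 0 ≤ ∑ ω ∈ L, sN ω := Finset.sum_nonneg fun ω _ => hsN0 ω
          linarith
        exact case_pure_u L H s sP (dR I n₀) _ _ hB1 hδ0 hsge hsP0 hresH
          (dR_bounds I n₀) (unfriendly_dR_L I hU₀)

end Voting
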